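/- Measurability of the essential-infimum envelope: if f : S → [0,∞) is measurable on a finite product of probability spaces (S, 𝕊, P) with P the product measure, then for every K ⊆ {1,...,n} the function x ↦ f̲_K(x) = ess inf_{y ∈ [x]_K} f(y) (essential infimum with respect to the product measure on coordinates outside K) is 𝕊-measurable. -/

import Mathlib

/- The essential infimum of `g` is the supremum of the levels `a` with `μ {g < a} = 0`.
Rational levels suffice, so it is a countable supremum, and for `g = F (x, ·)` each term is
measurable in `x` because `x ↦ ν {y | F (x, y) < a}` is (measurability of sections of a
measurable set under an s-finite measure). -/

open MeasureTheory ENNReal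

/-- The essential infimum of `f` over the set of points agreeing with `x` on the
coordinates in `K`, taken with respect to the product measure on the coordinates
outside of `K`. -/
noncomputable def essInfK {n : ℕ} {S : Fin n → Type*} [∀ i, MeasurableSpace (S i)]
    (P : ∀ i, Measure (S i)) (f : (∀ i, S i) → ℝ≥0∞) (K : Finset (Fin n))
    (x : ∀ i, S i) : ℝ≥0∞ :=
  essInf (fun z : ∀ i : {i : Fin n // i ∉ K}, S i =>
      f (fun i => if h : i ∈ K then x i else z ⟨i, h⟩))
    (Measure.pi fun i : {i : Fin n // i ∉ K} => P i)

theorem essInf_eq_iSup_rat {α : Type*} [MeasurableSpace α] (μ : Measure α) (g : α → ℝ≥0∞) :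
    essInf g μ = ⨆ q : ℚ,
      if μ {x | g x < Real.toNNReal q} = 0 then (Real.toNNReal q : ℝ≥0∞) else 0 := by
  rw [essInf_eq_sSup]
  refine le_antisymm (sSup_le fun a ha => le_of_forall_lt fun b hb => ?_) (iSup_le fun q => ?_)
  · obtain ⟨q, -, hbq, hqa⟩ := ENNReal.lt_iff_exists_rat_btwn.1 hb
    have hq : μ {x | g x < Real.toNNReal q} = 0 := measure_mono_null (fun x hx => hx.trans hqa) ha
    refine hbq.trans_le (le_iSup_of_le q ?_)
    rw [if_pos hq]
  · split_ifs with hq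
    · exact le_sSup hq
    · exact zero_le

theorem Measurable.essInf_prod_right' {α β : Type*} [MeasurableSpace α] [MeasurableSpace β]
    {ν : Measure β} [SFinite ν] {F : α × β → ℝ≥0∞} (hF : Measurable F) :
    Measurable fun x => essInf (fun y => F (x, y)) ν := by
  simp_rw [essInf_eq_iSup_rat]
  refine Measurable.iSup fun q => Measurable.ite ?_ measurable_const measurable_const
  exact measurable_measure_prodMk_left (measurableSet_lt hF measurable_const)
    (measurableSet_singleton 0)

/-- Measurability of the essential-infimum envelope `x ↦ ess inf_{y ∈ [x]_K} f(y)`. -/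
theorem measurable_essInfK {n : ℕ} {S : Fin n → Type*} [∀ i, MeasurableSpace (S i)]
    (P : ∀ i, Measure (S i)) [∀ i, IsProbabilityMeasure (P i)]
    (f : (∀ i, S i) → ℝ≥0∞) (hf : Measurable f) (K : Finset (Fin n)) :
    Measurable (essInfK P f K) := by
  -- `piEquivPiSubtypeProd.symm` glues `x` on `K` with `z` off `K`, as in `essInfK`.
  have hglue : Measurable fun p : (∀ i, S i) × (∀ i : {i // i ∉ K}, S i) =>
      (MeasurableEquiv.piEquivPiSubtypeProd S (· ∈ K)).symm (fun i => p.1 i, p.2) :=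
    (MeasurableEquiv.measurable _).comp
      ((measurable_pi_lambda _ fun i => measurable_pi_apply _ |>.comp measurable_fst).prodMk
        measurable_snd)
  exact (hf.comp hglue).essInf_prod_right'
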